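/- Let 𝔤 be a finite-dimensional real semisimple Lie algebra, U an open connected subset of a finite-dimensional real normed space, and ξ : U → 𝔤 a complementary-pair configuration with eigenspace bundles 𝔤_j(x), parabolic bundles f, f̂ and 1-forms β, β̂. Let η be a closed 𝔤-valued 1-form with η_x(u) ∈ f(x)^⊥ = 𝔤_{−1}(x) for all x, u, let m ∈ ℝ∖{0}, and suppose f̂ is parallel for ∇^m = d + mη (so f̂ is a Darboux transform of the isothermic map (f, η) with parameter m). Then: (1) β̂ = mη; (2) η̂ := β/m is closed with η̂_x(u) ∈ f̂(x)^⊥ = 𝔤_1(x), so (f̂, η̂) is isothermic; (3) for every t ∈ ℝ∖{m} and every smooth ψ : U → 𝔤, writing Γ(s)(x) for the automorphism of 𝔤 acting as s on 𝔤_1(x), 1 on 𝔤_0(x) and s⁻¹ on 𝔤_{−1}(x), one has Γ(1 − t/m)(x)((Dψ)_x(u) + t⁅η_x(u), ψ(x)⁆) = (D(Γ(1 − t/m)ψ))_x(u) + t⁅η̂_x(u), Γ(1 − t/m)(x)(ψ(x))⁆, i.e. Γ(1 − t/m) gauges d + tη to d + tη̂; (4) f is parallel for d + mη̂, i.e. f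 is a Darboux transform of (f̂, η̂) with parameter m. -/

import Mathlib

open Module

/-- A Lie algebra structure on a real normed space, recorded as a bilinear bracket.
(Using a bracket carried as data avoids typeclass diamonds between the normed and
the Lie-algebraic structure.) -/
structure LieStructure (L : Type*) [NormedAddCommGroup L] [NormedSpace ℝ L] where
  bracket : L →ₗ[ℝ] L →ₗ[ℝ] L
  alternating : ∀ x : L, bracket x x = 0
  jacobi : ∀ x y z : L, bracket x (bracket y z) =
    bracket (bracket x y) z + bracket y (bracket x z)

namespace LieStructure

variable {L : Type*} [NormedAddCommGroup L] [NormedSpace ℝ L] (B : LieStructure L)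

/-- The adjoint action `ad x = ⁅x, ·⁆`. -/
def ad (x : L) : Module.End ℝ L := B.bracket x

/-- The Killing form `κ(x, y) = tr (ad x ∘ ad y)`. -/
noncomputable def killing (x y : L) : ℝ := LinearMap.trace ℝ L (B.ad x * B.ad y)

/-- Semisimplicity, via Cartan's criterion: the Killing form is nondegenerate. -/
def IsSemisimple : Prop := ∀ x : L, (∀ y : L, B.killing x y = 0) → x = 0

/-- A Lie subalgebra: a submodule closed under the bracket. -/
def IsSubalgebra (p : Submodule ℝ L) : Prop :=
  ∀ x ∈ p, ∀ y ∈ p, B.bracket x y ∈ p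

/-- The Killing polar `𝔭^⊥`. -/
noncomputable def polar (p : Submodule ℝ L) : Submodule ℝ L where
  carrier := {x | ∀ y ∈ p, B.killing x y = 0}
  add_mem' := fun {a b} ha hb y hy => by
    have : B.killing (a + b) y = B.killing a y + B.killing b y := by
      simp [killing, ad, map_add, add_mul]
    rw [this, ha y hy, hb y hy, add_zero]
  zero_mem' := fun y hy => by simp [killing, ad, map_zero, zero_mul]
  smul_mem' := fun c a ha y hy => by
    have : B.killing (c • a) y = c * B.killing a y := by
      simp [killing, ad, map_smul, smul_mul_assoc]
    rw [this, ha y hy, mul_zero]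

/-- A height-one parabolic subalgebra: a subalgebra whose Killing polar is an
abelian (hence nilpotent) subalgebra. -/
def IsH1Parabolic (p : Submodule ℝ L) : Prop :=
  B.IsSubalgebra p ∧ ∀ x ∈ B.polar p, ∀ y ∈ B.polar p, B.bracket x y = 0

/-- Complementary pair of height-one parabolic subalgebras:
`𝔤 = 𝔭 ⊕ 𝔮^⊥` and `𝔤 = 𝔮 ⊕ 𝔭^⊥`. -/
noncomputable def ComplPair (p q : Submodule ℝ L) : Prop :=
  IsCompl p (B.polar q) ∧ IsCompl q (B.polar p)

/-- `exp (ad z)`, the finite exponential series of the adjoint action (exhaustive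
whenever `ad z` is nilpotent, since then `(ad z)^(dim 𝔤 + 1) = 0`). -/
noncomputable def expAd [FiniteDimensional ℝ L] (z : L) : Module.End ℝ L :=
  ∑ k ∈ Finset.range (Module.finrank ℝ L + 1), (k.factorial : ℝ)⁻¹ • (B.ad z) ^ k

end LieStructure

namespace LieStructure

variable {L : Type*} [NormedAddCommGroup L] [NormedSpace ℝ L] (B : LieStructure L)

/-- The `j`-eigenspace `𝔤_j(x) = ker (ad ξ(x) − j·id)` of a complementary-pair
configuration. -/
noncomputable def eigSp (ξx : L) (j : ℝ) : Submodule ℝ L :=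
  LinearMap.ker (B.ad ξx - j • (1 : Module.End ℝ L))

variable {E : Type*} [NormedAddCommGroup E] [NormedSpace ℝ E]

/-- The 1-form `β`, the `𝔤₁`-part of `dξ`: `β_x(u) = ½((ad ξ(x))² + ad ξ(x))(dξ_x(u))`. -/
noncomputable def beta [FiniteDimensional ℝ L] (ξ : E → L) (x : E) : E →L[ℝ] L :=
  (LinearMap.toContinuousLinearMap
    ((2⁻¹ : ℝ) • ((B.ad (ξ x)) ^ 2 + B.ad (ξ x)))).comp (fderiv ℝ ξ x)

/-- The 1-form `β̂`, the `𝔤₋₁`-part of `dξ`: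
`β̂_x(u) = −½((ad ξ(x))² − ad ξ(x))(dξ_x(u))`. -/
noncomputable def betaHat [FiniteDimensional ℝ L] (ξ : E → L) (x : E) : E →L[ℝ] L :=
  (LinearMap.toContinuousLinearMap
    (-((2⁻¹ : ℝ) • ((B.ad (ξ x)) ^ 2 - B.ad (ξ x))))).comp (fderiv ℝ ξ x)

/-- `Γ(s)` at a point: the endomorphism acting as `s` on `𝔤₁`, `1` on `𝔤₀` and
`s⁻¹` on `𝔤₋₁`, expressed through the eigenprojections of `ad ξ(x)`. -/
noncomputable def gam (ξx : L) (s : ℝ) : Module.End ℝ L :=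
  s • ((2⁻¹ : ℝ) • ((B.ad ξx) ^ 2 + B.ad ξx)) +
  ((1 : Module.End ℝ L) - (B.ad ξx) ^ 2) +
  s⁻¹ • ((2⁻¹ : ℝ) • ((B.ad ξx) ^ 2 - B.ad ξx))

end LieStructure

/-!
Write `A = ad ξ(x)`, so `A³ = A` and `𝔤 = 𝔤₋₁ ⊕ 𝔤₀ ⊕ 𝔤₁`. Differentiating `A³ = A` shows that
`ad (dξ)` is tangent to `{X | X³ = X}` at `A`; the `𝔤₀`-component of `dξ` then commutes with all
of `𝔤`, so it vanishes by semisimplicity and `dξ = β − β̂`. Parallelism of `f̂` applied to `ξ`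
itself kills the `𝔤₋₁`-component of `dξ + mη`, which gives `β̂ = mη`; hence `β = dξ + mη`, and
`η̂ = β/m` is closed by the symmetry of second derivatives. The gauge identity and the
parallelism of `f` for `d + β` are pointwise bracket identities, checked eigenspace by
eigenspace using `⁅𝔤ᵢ, 𝔤ⱼ⁆ ⊆ 𝔤ᵢ₊ⱼ`.
-/

open Filter Topology

theorem HasFDerivAt.eq_zero_of_eventually_eq_zero {E F : Type*} [NormedAddCommGroup E]
    [NormedSpace ℝ E] [NormedAddCommGroup F] [NormedSpace ℝ F] {f : E → F} {f' : E →L[ℝ] F}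
    {x : E} (hf : HasFDerivAt f f' x) (h : ∀ᶠ y in 𝓝 x, f y = 0) : f' = 0 :=
  (hf.congr_of_eventuallyEq (h.mono fun _ hy => hy.symm)).unique (hasFDerivAt_const 0 x)

theorem fderiv_apply_comm_of_eventuallyEq {E F : Type*} [NormedAddCommGroup E] [NormedSpace ℝ E]
    [NormedAddCommGroup F] [NormedSpace ℝ F] {f : E → F} {η θ : E → E →L[ℝ] F} {x : E} {r : ℝ}
    (hθ : ∀ᶠ y in 𝓝 x, θ y = r • fderiv ℝ f y + η y) (hf : ContDiffAt ℝ 2 f x)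
    (hη : DifferentiableAt ℝ η x) (hηc : ∀ u v, fderiv ℝ η x u v = fderiv ℝ η x v u) (u v : E) :
    fderiv ℝ θ x u v = fderiv ℝ θ x v u := by
  have hdf : DifferentiableAt ℝ (fderiv ℝ f) x :=
    (hf.fderiv_right (m := 1) le_rfl).differentiableAt one_ne_zero
  have h := ((hdf.hasFDerivAt.const_smul r).add hη.hasFDerivAt).congr_of_eventuallyEq hθ
  rw [h.fderiv]
  simp only [add_apply, smul_apply]
  rw [hf.isSymmSndFDerivAt (by simp) u v, hηc]

namespace LieStructure

variable {L : Type*} [NormedAddCommGroup L] [NormedSpace ℝ L] (B : LieStructure L)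

theorem bracket_swap (x y : L) : B.bracket x y = -B.bracket y x := by
  have h := B.alternating (x + y)
  simp only [map_add, LinearMap.add_apply, B.alternating, zero_add, add_zero] at h
  exact eq_neg_of_add_eq_zero_right h

theorem mem_eigSp_iff {a v : L} {j : ℝ} : v ∈ B.eigSp a j ↔ B.bracket a v = j • v := by
  simp [eigSp, sub_eq_zero, ad]

theorem self_mem_eigSp_zero (a : L) : a ∈ B.eigSp a 0 := by
  rw [mem_eigSp_iff, B.alternating, zero_smul]

theorem bracket_bracket_eq_smul {a b c : L} {j k : ℝ} (hb : B.bracket a b = j • b)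
    (hc : B.bracket a c = k • c) : B.bracket a (B.bracket b c) = (j + k) • B.bracket b c := by
  rw [B.jacobi, hb, hc, map_smul, LinearMap.smul_apply, map_smul, add_smul]

variable {B}

theorem IsSemisimple.eq_zero_of_ad_eq_zero (hss : B.IsSemisimple) {z : L} (hz : B.ad z = 0) :
    z = 0 :=
  hss z fun y => by simp [killing, hz]

variable {a : L}

theorem bracket_bracket_bracket_eq_bracket (hA : B.ad a ^ 3 = B.ad a) (v : L) :
    B.bracket a (B.bracket a (B.bracket a v)) = B.bracket a v := by
  simpa [pow_succ, ad] using LinearMap.congr_fun hA v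

theorem eq_zero_of_bracket_eq_smul (hA : B.ad a ^ 3 = B.ad a) {b : L} {c : ℝ}
    (hb : B.bracket a b = c • b) (hc : c ^ 3 ≠ c) : b = 0 := by
  have h := bracket_bracket_bracket_eq_bracket hA b
  simp only [hb, map_smul, smul_smul] at h
  have h3 : (c ^ 3 - c) • b = 0 := by rw [sub_smul, pow_three, ← mul_assoc, h, sub_self]
  exact (smul_eq_zero.mp h3).resolve_left (sub_ne_zero.mpr hc)

theorem exists_eigen_decomposition (hA : B.ad a ^ 3 = B.ad a) (p : L) :
    ∃ pp pz pn, p = pp + pz + pn ∧ B.bracket a pp = pp ∧ B.bracket a pz = 0 ∧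
      B.bracket a pn = -pn := by
  have h := bracket_bracket_bracket_eq_bracket hA p
  refine ⟨(2⁻¹ : ℝ) • (B.bracket a (B.bracket a p) + B.bracket a p),
    p - B.bracket a (B.bracket a p),
    (2⁻¹ : ℝ) • (B.bracket a (B.bracket a p) - B.bracket a p), by module, ?_, ?_, ?_⟩ <;>
  simp only [map_smul, map_add, map_sub, h] <;> module

@[elab_as_elim]
theorem eigen_induction (hA : B.ad a ^ 3 = B.ad a) {P : L → Prop}
    (add : ∀ p q, P p → P q → P (p + q))
    (eigen : ∀ k : ℝ, (k = 1 ∨ k = 0 ∨ k = -1) → ∀ p, B.bracket a p = k • p → P p) (p : L) :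
    P p := by
  obtain ⟨pp, pz, pn, rfl, hp, hz, hn⟩ := exists_eigen_decomposition hA p
  exact add _ _ (add _ _ (eigen 1 (by norm_num) _ (by rw [hp, one_smul]))
    (eigen 0 (by norm_num) _ (by rw [hz, zero_smul])))
    (eigen (-1) (by norm_num) _ (by rw [hn, neg_one_smul]))

theorem bracket_bracket_eq_bracket_of_mem_sup {p : L}
    (hp : p ∈ B.eigSp a 0 ⊔ B.eigSp a 1) : B.bracket a (B.bracket a p) = B.bracket a p := by
  obtain ⟨y, hy, z, hz, rfl⟩ := Submodule.mem_sup.mp hp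
  rw [mem_eigSp_iff, zero_smul] at hy
  rw [mem_eigSp_iff, one_smul] at hz
  simp only [map_add, hy, hz, zero_add]

theorem mem_eigSp_neg_one_sup_zero_iff (hA : B.ad a ^ 3 = B.ad a) {p : L} :
    p ∈ B.eigSp a (-1) ⊔ B.eigSp a 0 ↔ B.bracket a (B.bracket a p) + B.bracket a p = 0 := by
  constructor
  · intro hp
    obtain ⟨y, hy, z, hz, rfl⟩ := Submodule.mem_sup.mp hp
    rw [mem_eigSp_iff, neg_one_smul] at hy
    rw [mem_eigSp_iff, zero_smul] at hz
    simp only [map_add, map_neg, hy, hz, neg_neg, add_zero, add_neg_cancel]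
  · intro hp
    obtain ⟨pp, pz, pn, rfl, hpp, hpz, hpn⟩ := exists_eigen_decomposition hA p
    have hpp0 : pp = 0 := by
      simp only [map_add, map_neg, hpp, hpz, hpn, neg_neg, add_zero] at hp
      linear_combination (norm := module) (2⁻¹ : ℝ) • hp
    rw [hpp0, zero_add, add_comm]
    refine Submodule.add_mem_sup ?_ ?_
    · rw [mem_eigSp_iff, hpn, neg_one_smul]
    · rw [mem_eigSp_iff, hpz, zero_smul]

/-- If `ad w` is tangent to `{X | X³ = X}` at `ad a`, the `𝔤₀`-component of `w` commutes with
every eigenvector of `ad a`, so it is central and vanishes. -/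
theorem bracket_bracket_eq_self_of_tangent (hss : B.IsSemisimple) (hA : B.ad a ^ 3 = B.ad a)
    {w : L} (hw : ∀ v, B.bracket w (B.bracket a (B.bracket a v)) +
      B.bracket a (B.bracket w (B.bracket a v)) + B.bracket a (B.bracket a (B.bracket w v)) =
        B.bracket w v) :
    B.bracket a (B.bracket a w) = w := by
  obtain ⟨wp, wz, wn, rfl, hp, hz, hn⟩ := exists_eigen_decomposition hA w
  have hcentral : ∀ v, B.bracket wz v = 0 := eigen_induction hA
    (fun p q hp hq => by rw [map_add, hp, hq, add_zero]) fun k hk v hv => by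
      have hwv := hw v
      have ep := B.bracket_bracket_eq_smul (j := 1) (by rw [hp, one_smul]) hv
      have ez := B.bracket_bracket_eq_smul (j := 0) (by rw [hz, zero_smul]) hv
      have en := B.bracket_bracket_eq_smul (j := -1) (by rw [hn, neg_one_smul]) hv
      simp only [map_add, LinearMap.add_apply, hv, map_smul, ep, ez, en, smul_add,
        smul_smul] at hwv
      rcases hk with rfl | rfl | rfl
      · rw [eq_zero_of_bracket_eq_smul hA ep (by norm_num)] at hwv
        linear_combination (norm := module) (2⁻¹ : ℝ) • hwv
      · linear_combination (norm := module) -hwv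
      · rw [eq_zero_of_bracket_eq_smul hA en (by norm_num)] at hwv
        linear_combination (norm := module) (2⁻¹ : ℝ) • hwv
  rw [hss.eq_zero_of_ad_eq_zero (LinearMap.ext hcentral)]
  simp only [map_add, hp, hn, map_neg, add_zero, neg_neg]

variable (B) in
/-- The derivative of `a ↦ B.gam a s` in the direction `w`. -/
noncomputable def gamDeriv (a w : L) (s : ℝ) : Module.End ℝ L :=
  (2⁻¹ * s - 1 + 2⁻¹ * s⁻¹) • (B.ad w * B.ad a + B.ad a * B.ad w) +
    (2⁻¹ * s - 2⁻¹ * s⁻¹) • B.ad w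

theorem gam_apply (s : ℝ) (p : L) :
    B.gam a s p = (2⁻¹ * s - 1 + 2⁻¹ * s⁻¹) • B.bracket a (B.bracket a p) +
      (2⁻¹ * s - 2⁻¹ * s⁻¹) • B.bracket a p + p := by
  simp only [gam, ad, LinearMap.add_apply, LinearMap.smul_apply, LinearMap.sub_apply,
    Module.End.one_apply, sq, Module.End.mul_apply]
  module

theorem gamDeriv_apply (w : L) (s : ℝ) (p : L) :
    B.gamDeriv a w s p = (2⁻¹ * s - 1 + 2⁻¹ * s⁻¹) •
      (B.bracket w (B.bracket a p) + B.bracket a (B.bracket w p)) +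
      (2⁻¹ * s - 2⁻¹ * s⁻¹) • B.bracket w p := by
  simp only [gamDeriv, ad, LinearMap.add_apply, LinearMap.smul_apply, Module.End.mul_apply]

theorem gamDeriv_sub_apply (hA : B.ad a ^ 3 = B.ad a) {zp zn : L} (hp : B.bracket a zp = zp)
    (hn : B.bracket a zn = -zn) {s : ℝ} (hs : s ≠ 0) (p : L) :
    B.gamDeriv a (zp - zn) s p =
      (1 - s) • (B.gam a s (B.bracket zn p) - B.bracket zp (B.gam a s p)) := by
  induction p using eigen_induction hA with
  | add p q ihp ihq =>
    rw [map_add, ihp, ihq]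
    simp only [map_add]
    module
  | eigen k hk p hkp =>
    have ep := B.bracket_bracket_eq_smul (j := 1) (by rw [hp, one_smul]) hkp
    have en := B.bracket_bracket_eq_smul (j := -1) (by rw [hn, neg_one_smul]) hkp
    simp only [gam_apply, gamDeriv_apply, map_sub, map_smul, map_add, LinearMap.sub_apply,
      hkp, ep, en, smul_smul, smul_add, smul_sub]
    rcases hk with rfl | rfl | rfl
    · simp only [eq_zero_of_bracket_eq_smul hA ep (by norm_num), smul_zero, add_zero]
      match_scalars; field_simp; ring
    · match_scalars <;> field_simp <;> ring
    · simp only [eq_zero_of_bracket_eq_smul hA en (by norm_num), smul_zero, add_zero]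
      match_scalars; field_simp; ring

theorem bracket_bracket_add_bracket_of_mem_sup (hA : B.ad a ^ 3 = B.ad a) {zp zn : L}
    (hp : B.bracket a zp = zp) (hn : B.bracket a zn = -zn) {p : L}
    (hmem : p ∈ B.eigSp a (-1) ⊔ B.eigSp a 0) :
    B.bracket a (B.bracket a (B.bracket zp p)) + B.bracket a (B.bracket zp p) =
      B.bracket (zp - zn) (B.bracket a p) + B.bracket a (B.bracket (zp - zn) p) +
        B.bracket (zp - zn) p := by
  obtain ⟨y, hy, z, hz, rfl⟩ := Submodule.mem_sup.mp hmem
  rw [mem_eigSp_iff] at hy hz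
  have epy := B.bracket_bracket_eq_smul (j := 1) (by rw [hp, one_smul]) hy
  have epz := B.bracket_bracket_eq_smul (j := 1) (by rw [hp, one_smul]) hz
  have enz := B.bracket_bracket_eq_smul (j := -1) (by rw [hn, neg_one_smul]) hz
  have eny := eq_zero_of_bracket_eq_smul hA
    (B.bracket_bracket_eq_smul (j := -1) (by rw [hn, neg_one_smul]) hy) (by norm_num)
  simp only [map_add, map_sub, map_smul, LinearMap.sub_apply, hy, hz, epy, epz, enz, eny,
    smul_zero, map_zero, smul_smul, smul_sub]
  match_scalars <;> ring

variable {E : Type*} [NormedAddCommGroup E] [NormedSpace ℝ E] [FiniteDimensional ℝ L] {x : E}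

variable (B) in
theorem hasFDerivAt_bracket {f g : E → L} {f' g' : E →L[ℝ] L} (hf : HasFDerivAt f f' x)
    (hg : HasFDerivAt g g' x) :
    HasFDerivAt (fun y => B.bracket (f y) (g y))
      ((B.bracket.toContinuousBilinearMap (f x)).comp g' +
        (B.bracket.toContinuousBilinearMap.flip (g x)).comp f') x :=
  B.bracket.toContinuousBilinearMap.hasFDerivAt_of_bilinear hf hg

theorem bracket_tangent_of_eventually_cube {ξ : E → L} {ξ' : E →L[ℝ] L}
    (hA : ∀ᶠ y in 𝓝 x, B.ad (ξ y) ^ 3 = B.ad (ξ y)) (hξ : HasFDerivAt ξ ξ' x) (u : E) (v : L) :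
    B.bracket (ξ' u) (B.bracket (ξ x) (B.bracket (ξ x) v)) +
      B.bracket (ξ x) (B.bracket (ξ' u) (B.bracket (ξ x) v)) +
      B.bracket (ξ x) (B.bracket (ξ x) (B.bracket (ξ' u) v)) = B.bracket (ξ' u) v := by
  have h1 := B.hasFDerivAt_bracket hξ (hasFDerivAt_const v x)
  have h3 := B.hasFDerivAt_bracket hξ (B.hasFDerivAt_bracket hξ h1)
  have h0 := (h3.sub h1).eq_zero_of_eventually_eq_zero
    (hA.mono fun y hy => sub_eq_zero.mpr (bracket_bracket_bracket_eq_bracket hy v))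
  have h0u := DFunLike.congr_fun h0 u
  simp only [ContinuousLinearMap.comp_zero, zero_add, ContinuousLinearMap.comp_add, sub_apply,
    add_apply, ContinuousLinearMap.comp_apply, ContinuousLinearMap.flip_apply,
    LinearMap.toContinuousBilinearMap_apply, zero_apply] at h0u
  linear_combination (norm := module) h0u

theorem beta_apply (ξ : E → L) (u : E) :
    B.beta ξ x u = (2⁻¹ : ℝ) • (B.bracket (ξ x) (B.bracket (ξ x) (fderiv ℝ ξ x u)) +
      B.bracket (ξ x) (fderiv ℝ ξ x u)) := by
  simp only [beta, ad, ContinuousLinearMap.comp_apply, LinearMap.coe_toContinuousLinearMap',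
    LinearMap.smul_apply, LinearMap.add_apply, sq, Module.End.mul_apply]

theorem betaHat_apply (ξ : E → L) (u : E) :
    B.betaHat ξ x u = -((2⁻¹ : ℝ) • (B.bracket (ξ x) (B.bracket (ξ x) (fderiv ℝ ξ x u)) -
      B.bracket (ξ x) (fderiv ℝ ξ x u))) := by
  simp only [betaHat, ad, ContinuousLinearMap.comp_apply, LinearMap.coe_toContinuousLinearMap',
    LinearMap.neg_apply, LinearMap.smul_apply, LinearMap.sub_apply, sq, Module.End.mul_apply]

theorem bracket_beta_apply {ξ : E → L} (hA : B.ad (ξ x) ^ 3 = B.ad (ξ x)) (u : E) :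
    B.bracket (ξ x) (B.beta ξ x u) = B.beta ξ x u := by
  rw [beta_apply, map_smul, map_add, bracket_bracket_bracket_eq_bracket hA, add_comm]

theorem bracket_betaHat_apply {ξ : E → L} (hA : B.ad (ξ x) ^ 3 = B.ad (ξ x)) (u : E) :
    B.bracket (ξ x) (B.betaHat ξ x u) = -B.betaHat ξ x u := by
  rw [betaHat_apply, map_neg, map_smul, map_sub, bracket_bracket_bracket_eq_bracket hA]
  module

theorem betaHat_apply_eq_of_add_mem {ξ : E → L} {u : E} {e : L} (he : e ∈ B.eigSp (ξ x) (-1))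
    (h : fderiv ℝ ξ x u + e ∈ B.eigSp (ξ x) 0 ⊔ B.eigSp (ξ x) 1) : B.betaHat ξ x u = e := by
  have h' := bracket_bracket_eq_bracket_of_mem_sup h
  rw [mem_eigSp_iff, neg_one_smul] at he
  simp only [map_add, he, map_neg, neg_neg] at h'
  rw [betaHat_apply]
  linear_combination (norm := module) (-2⁻¹ : ℝ) • h'

theorem fderiv_apply_eq_beta_sub_betaHat (hss : B.IsSemisimple) {ξ : E → L}
    (hA : ∀ᶠ y in 𝓝 x, B.ad (ξ y) ^ 3 = B.ad (ξ y)) (hξ : DifferentiableAt ℝ ξ x) (u : E) :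
    fderiv ℝ ξ x u = B.beta ξ x u - B.betaHat ξ x u := by
  have hw := bracket_bracket_eq_self_of_tangent hss hA.self_of_nhds
    (bracket_tangent_of_eventually_cube hA hξ.hasFDerivAt u)
  rw [beta_apply, betaHat_apply, hw]
  module

theorem fderiv_gam_apply {ξ ψ : E → L} (hξ : DifferentiableAt ℝ ξ x)
    (hψ : DifferentiableAt ℝ ψ x) (s : ℝ) (u : E) :
    fderiv ℝ (fun y => B.gam (ξ y) s (ψ y)) x u =
      B.gam (ξ x) s (fderiv ℝ ψ x u) + B.gamDeriv (ξ x) (fderiv ℝ ξ x u) s (ψ x) := by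
  have h1 := B.hasFDerivAt_bracket hξ.hasFDerivAt hψ.hasFDerivAt
  have h := (((B.hasFDerivAt_bracket hξ.hasFDerivAt h1).const_smul (2⁻¹ * s - 1 + 2⁻¹ * s⁻¹)).add
    (h1.const_smul (2⁻¹ * s - 2⁻¹ * s⁻¹))).add hψ.hasFDerivAt
  rw [(h.congr_of_eventuallyEq (.of_forall fun y => gam_apply s (ψ y))).fderiv]
  simp only [ContinuousLinearMap.comp_add, add_apply, smul_apply, ContinuousLinearMap.comp_apply,
    ContinuousLinearMap.flip_apply, LinearMap.toContinuousBilinearMap_apply, gam_apply,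
    gamDeriv_apply]
  module

theorem gam_fderiv_add_bracket_betaHat (hss : B.IsSemisimple) {ξ ψ : E → L}
    (hA : ∀ᶠ y in 𝓝 x, B.ad (ξ y) ^ 3 = B.ad (ξ y)) (hξ : DifferentiableAt ℝ ξ x)
    (hψ : DifferentiableAt ℝ ψ x) {s : ℝ} (hs : s ≠ 0) (u : E) :
    B.gam (ξ x) s (fderiv ℝ ψ x u + (1 - s) • B.bracket (B.betaHat ξ x u) (ψ x)) =
      fderiv ℝ (fun y => B.gam (ξ y) s (ψ y)) x u +
        (1 - s) • B.bracket (B.beta ξ x u) (B.gam (ξ x) s (ψ x)) := by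
  rw [fderiv_gam_apply hξ hψ, fderiv_apply_eq_beta_sub_betaHat hss hA hξ,
    gamDeriv_sub_apply hA.self_of_nhds (bracket_beta_apply hA.self_of_nhds u)
      (bracket_betaHat_apply hA.self_of_nhds u) hs, map_add, map_smul]
  module

theorem fderiv_add_bracket_beta_mem_sup (hss : B.IsSemisimple) {ξ ψ : E → L}
    (hA : ∀ᶠ y in 𝓝 x, B.ad (ξ y) ^ 3 = B.ad (ξ y)) (hξ : DifferentiableAt ℝ ξ x)
    (hψ : DifferentiableAt ℝ ψ x)
    (hmem : ∀ᶠ y in 𝓝 x, ψ y ∈ B.eigSp (ξ y) (-1) ⊔ B.eigSp (ξ y) 0) (u : E) :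
    fderiv ℝ ψ x u + B.bracket (B.beta ξ x u) (ψ x) ∈
      B.eigSp (ξ x) (-1) ⊔ B.eigSp (ξ x) 0 := by
  have h1 := B.hasFDerivAt_bracket hξ.hasFDerivAt hψ.hasFDerivAt
  have h0 := ((B.hasFDerivAt_bracket hξ.hasFDerivAt h1).add h1).eq_zero_of_eventually_eq_zero
    ((hA.and hmem).mono fun y hy => (mem_eigSp_neg_one_sup_zero_iff hy.1).mp hy.2)
  have h0u := DFunLike.congr_fun h0 u
  simp only [ContinuousLinearMap.comp_add, add_apply, ContinuousLinearMap.comp_apply,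
    ContinuousLinearMap.flip_apply, LinearMap.toContinuousBilinearMap_apply, zero_apply] at h0u
  have key := bracket_bracket_add_bracket_of_mem_sup hA.self_of_nhds
    (bracket_beta_apply hA.self_of_nhds u) (bracket_betaHat_apply hA.self_of_nhds u)
    hmem.self_of_nhds
  rw [← fderiv_apply_eq_beta_sub_betaHat hss hA hξ] at key
  rw [mem_eigSp_neg_one_sup_zero_iff hA.self_of_nhds, map_add, map_add]
  linear_combination (norm := module) h0u + key

end LieStructure

open LieStructure

theorem darboux_transform_isothermic_general
    {L : Type*} [NormedAddCommGroup L] [NormedSpace ℝ L] [FiniteDimensional ℝ L]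
    (B : LieStructure L) (hss : B.IsSemisimple)
    {E : Type*} [NormedAddCommGroup E] [NormedSpace ℝ E]
    (U : Set E) (hU : IsOpen U)
    (ξ : E → L) (hξ : ContDiffOn ℝ (⊤ : ℕ∞) ξ U)
    (hconf : ∀ x ∈ U, (B.ad (ξ x)) ^ 3 = B.ad (ξ x))
    (η : E → E →L[ℝ] L) (hη : ContDiffOn ℝ (⊤ : ℕ∞) η U)
    (hηval : ∀ x ∈ U, ∀ u : E, η x u ∈ B.eigSp (ξ x) (-1))
    (hηclosed : ∀ x ∈ U, ∀ u v : E, fderiv ℝ η x u v = fderiv ℝ η x v u)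
    (m : ℝ) (hm : m ≠ 0)
    -- `f̂ = 𝔤₀ ⊕ 𝔤₁` is parallel for `∇ᵐ = d + mη`
    (hpar : ∀ ψ : E → L, ContDiffOn ℝ (⊤ : ℕ∞) ψ U →
      (∀ x ∈ U, ψ x ∈ B.eigSp (ξ x) 0 ⊔ B.eigSp (ξ x) 1) →
      ∀ x ∈ U, ∀ u : E,
        fderiv ℝ ψ x u + m • B.bracket (η x u) (ψ x) ∈
          B.eigSp (ξ x) 0 ⊔ B.eigSp (ξ x) 1) :
    -- (1) `β̂ = mη`
    (∀ x ∈ U, ∀ u : E, B.betaHat ξ x u = m • η x u) ∧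
    -- (2) `η̂ := β/m` is closed and valued in `f̂^⊥ = 𝔤₁`, so `(f̂, η̂)` is isothermic
    (∀ x ∈ U, ∀ u : E, m⁻¹ • B.beta ξ x u ∈ B.eigSp (ξ x) 1) ∧
    (∀ x ∈ U, ∀ u v : E,
      fderiv ℝ (fun y => m⁻¹ • B.beta ξ y) x u v =
      fderiv ℝ (fun y => m⁻¹ • B.beta ξ y) x v u) ∧
    -- (3) `Γ(1 − t/m)` gauges `d + tη` to `d + tη̂`
    (∀ t : ℝ, t ≠ m → ∀ ψ : E → L, ContDiffOn ℝ (⊤ : ℕ∞) ψ U →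
      ∀ x ∈ U, ∀ u : E,
        B.gam (ξ x) (1 - t / m) (fderiv ℝ ψ x u + t • B.bracket (η x u) (ψ x)) =
        fderiv ℝ (fun y => B.gam (ξ y) (1 - t / m) (ψ y)) x u +
          t • B.bracket (m⁻¹ • B.beta ξ x u) (B.gam (ξ x) (1 - t / m) (ψ x))) ∧
    -- (4) `f = 𝔤₋₁ ⊕ 𝔤₀` is parallel for `d + mη̂`, i.e. `f = 𝒟_m f̂`
    (∀ ψ : E → L, ContDiffOn ℝ (⊤ : ℕ∞) ψ U →
      (∀ x ∈ U, ψ x ∈ B.eigSp (ξ x) (-1) ⊔ B.eigSp (ξ x) 0) →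
      ∀ x ∈ U, ∀ u : E,
        fderiv ℝ ψ x u + m • B.bracket (m⁻¹ • B.beta ξ x u) (ψ x) ∈
          B.eigSp (ξ x) (-1) ⊔ B.eigSp (ξ x) 0) := by
  have near : ∀ {P : E → Prop}, (∀ y ∈ U, P y) → ∀ x ∈ U, ∀ᶠ y in 𝓝 x, P y :=
    fun h x hx => eventually_of_mem (hU.mem_nhds hx) h
  have hdiff : ∀ {φ : E → L}, ContDiffOn ℝ (⊤ : ℕ∞) φ U → ∀ x ∈ U, DifferentiableAt ℝ φ x :=
    fun hφ x hx => (hφ.contDiffAt (hU.mem_nhds hx)).differentiableAt (by simp)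
  have hβhat : ∀ x ∈ U, ∀ u, B.betaHat ξ x u = m • η x u := fun x hx u => by
    refine betaHat_apply_eq_of_add_mem (Submodule.smul_mem _ m (hηval x hx u)) ?_
    have hηξ : B.bracket (η x u) (ξ x) = η x u := by
      rw [bracket_swap, (mem_eigSp_iff B).mp (hηval x hx u), neg_one_smul, neg_neg]
    simpa only [hηξ] using
      hpar ξ hξ (fun y _ => Submodule.mem_sup_left (self_mem_eigSp_zero B (ξ y))) x hx u
  have hβ : ∀ x ∈ U, B.beta ξ x = fderiv ℝ ξ x + m • η x := fun x hx => by
    ext u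
    rw [add_apply, smul_apply, ← hβhat x hx u,
      fderiv_apply_eq_beta_sub_betaHat hss (near hconf x hx) (hdiff hξ x hx), sub_add_cancel]
  refine ⟨hβhat, fun x hx u => ?_, fun x hx => ?_, fun t ht ψ hψ x hx u => ?_,
    fun ψ hψ hmem x hx u => ?_⟩
  · rw [mem_eigSp_iff, map_smul, bracket_beta_apply (hconf x hx), one_smul]
  · have hηx := (hη.contDiffAt (hU.mem_nhds hx)).differentiableAt (by simp)
    refine fderiv_apply_comm_of_eventuallyEq (r := m⁻¹) (near (fun y hy => ?_) x hx)
      ((hξ.contDiffAt (hU.mem_nhds hx)).of_le (WithTop.coe_le_coe.mpr le_top)) hηx (hηclosed x hx)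
    rw [hβ y hy, smul_add, smul_smul, inv_mul_cancel₀ hm, one_smul]
  · have hs : 1 - t / m ≠ 0 := by
      rwa [sub_ne_zero, ne_comm, ne_eq, div_eq_one_iff_eq hm]
    have h := gam_fderiv_add_bracket_betaHat hss (near hconf x hx) (hdiff hξ x hx)
      (hdiff hψ x hx) hs u
    simp only [sub_sub_cancel, hβhat x hx u, map_smul, LinearMap.smul_apply, smul_smul,
      div_mul_cancel₀ t hm] at h
    rwa [map_smul, LinearMap.smul_apply, smul_smul, ← div_eq_mul_inv]
  · rw [map_smul, LinearMap.smul_apply, smul_smul, mul_inv_cancel₀ hm, one_smul]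
    exact fderiv_add_bracket_beta_mem_sup hss (near hconf x hx) (hdiff hξ x hx) (hdiff hψ x hx)
      (near hmem x hx) u

/-- **Darboux transforms are isothermic, and the relationship is reciprocal.**
For an isothermic map `(f, η)` and a Darboux transform `f̂` with parameter `m`
(encoded by a complementary-pair configuration `ξ` with `f̂` parallel for
`∇ᵐ = d + mη`): (1) `β̂ = mη`; (2) `η̂ := β/m` makes `(f̂, η̂)` isothermic;
(3) `Γ(1 − t/m)` gauges `d + tη` to `d + tη̂`; (4) `f` is a Darboux transform of
`(f̂, η̂)` with parameter `m`. -/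
theorem darboux_transform_isothermic
    {L : Type*} [NormedAddCommGroup L] [NormedSpace ℝ L] [FiniteDimensional ℝ L]
    (B : LieStructure L) (hss : B.IsSemisimple)
    {E : Type*} [NormedAddCommGroup E] [NormedSpace ℝ E] [FiniteDimensional ℝ E]
    (U : Set E) (hU : IsOpen U) (hUconn : IsConnected U)
    (ξ : E → L) (hξ : ContDiffOn ℝ (⊤ : ℕ∞) ξ U)
    (hconf : ∀ x ∈ U, (B.ad (ξ x)) ^ 3 = B.ad (ξ x))
    (η : E → E →L[ℝ] L) (hη : ContDiffOn ℝ (⊤ : ℕ∞) η U)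
    (hηval : ∀ x ∈ U, ∀ u : E, η x u ∈ B.eigSp (ξ x) (-1))
    (hηclosed : ∀ x ∈ U, ∀ u v : E, fderiv ℝ η x u v = fderiv ℝ η x v u)
    (m : ℝ) (hm : m ≠ 0)
    -- `f̂ = 𝔤₀ ⊕ 𝔤₁` is parallel for `∇ᵐ = d + mη`
    (hpar : ∀ ψ : E → L, ContDiffOn ℝ (⊤ : ℕ∞) ψ U →
      (∀ x ∈ U, ψ x ∈ B.eigSp (ξ x) 0 ⊔ B.eigSp (ξ x) 1) →
      ∀ x ∈ U, ∀ u : E,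
        fderiv ℝ ψ x u + m • B.bracket (η x u) (ψ x) ∈
          B.eigSp (ξ x) 0 ⊔ B.eigSp (ξ x) 1) :
    -- (1) `β̂ = mη`
    (∀ x ∈ U, ∀ u : E, B.betaHat ξ x u = m • η x u) ∧
    -- (2) `η̂ := β/m` is closed and valued in `f̂^⊥ = 𝔤₁`, so `(f̂, η̂)` is isothermic
    (∀ x ∈ U, ∀ u : E, m⁻¹ • B.beta ξ x u ∈ B.eigSp (ξ x) 1) ∧
    (∀ x ∈ U, ∀ u v : E,
      fderiv ℝ (fun y => m⁻¹ • B.beta ξ y) x u v =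
      fderiv ℝ (fun y => m⁻¹ • B.beta ξ y) x v u) ∧
    -- (3) `Γ(1 − t/m)` gauges `d + tη` to `d + tη̂`
    (∀ t : ℝ, t ≠ m → ∀ ψ : E → L, ContDiffOn ℝ (⊤ : ℕ∞) ψ U →
      ∀ x ∈ U, ∀ u : E,
        B.gam (ξ x) (1 - t / m) (fderiv ℝ ψ x u + t • B.bracket (η x u) (ψ x)) =
        fderiv ℝ (fun y => B.gam (ξ y) (1 - t / m) (ψ y)) x u +
          t • B.bracket (m⁻¹ • B.beta ξ x u) (B.gam (ξ x) (1 - t / m) (ψ x))) ∧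
    -- (4) `f = 𝔤₋₁ ⊕ 𝔤₀` is parallel for `d + mη̂`, i.e. `f = 𝒟_m f̂`
    (∀ ψ : E → L, ContDiffOn ℝ (⊤ : ℕ∞) ψ U →
      (∀ x ∈ U, ψ x ∈ B.eigSp (ξ x) (-1) ⊔ B.eigSp (ξ x) 0) →
      ∀ x ∈ U, ∀ u : E,
        fderiv ℝ ψ x u + m • B.bracket (m⁻¹ • B.beta ξ x u) (ψ x) ∈
          B.eigSp (ξ x) (-1) ⊔ B.eigSp (ξ x) 0) :=
  darboux_transform_isothermic_general B hss U hU ξ hξ hconf η hη hηval hηclosed m hm hpar
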